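/- For every natural number n, the number of noncrossing partitions of {1,…,n} equals the Catalan number C_n = (1/(2n+1))·C(2n+1, n). -/

import Mathlib

/-!
In a noncrossing partition of `[a, b)`, let `j` be the least element other than `a` of the block
of `a` (or `j = b` if `{a}` is a block). A block avoiding `a` with elements on both sides of `j`
would cross the block of `a`, so every other block lies in `(a, j)` or in `[j, b)`. Hence such a
partition amounts to the choice of `j`, a noncrossing partition of `(a, j)` and one of `[j, b)`,
the block of `a` being that of `j` with `a` added. Counting over all intervals at once (rather
than over `[1, n]`) makes both pieces intervals again, and the counts obey the Catalan recurrence.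
-/

/-- A finpartition of a finite set of naturals is noncrossing (planar) if there are no
elements `a < b < c < d` with `a, c` in one block and `b, d` in a different block. -/
def IsNoncrossing {s : Finset ℕ} (P : Finpartition s) : Prop :=
  ∀ a b c d : ℕ, a < b → b < c → c < d →
    ∀ B₁ ∈ P.parts, ∀ B₂ ∈ P.parts,
      a ∈ B₁ → c ∈ B₁ → b ∈ B₂ → d ∈ B₂ → B₁ = B₂

open Finset

theorem Finset.notMem_Ico_of_lt {α : Type*} [Preorder α] [LocallyFiniteOrder α] {a b c : α}
    (hca : c < a) : c ∉ Ico a b :=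
  fun h => hca.not_ge (mem_Ico.1 h).1

namespace Finpartition

variable {α : Type*} [DecidableEq α] {s t u : Finset α}

theorem ext_of_part_eq {P Q : Finpartition s} (h : ∀ x ∈ s, P.part x = Q.part x) : P = Q := by
  suffices key : ∀ {P Q : Finpartition s}, (∀ x ∈ s, P.part x = Q.part x) → P.parts ⊆ Q.parts from
    Finpartition.ext (key h |>.antisymm (key fun x hx => (h x hx).symm))
  intro P Q h B hB
  obtain ⟨x, hxB⟩ := P.nonempty_of_mem_parts hB
  have hx := P.le hB hxB
  rw [← P.part_eq_of_mem hB hxB, h x hx]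
  exact Q.part_mem.2 hx

theorem part_restrict (P : Finpartition s) (h : t ⊆ s) {x : α} (hx : x ∈ t) :
    (P.restrict h).part x = P.part x ∩ t := by
  have hxt : x ∈ P.part x ∩ t := mem_inter.2 ⟨P.mem_part (h hx), hx⟩
  refine part_eq_of_mem _ (mem_erase.2 ⟨?_, mem_image_of_mem _ (P.part_mem.2 (h hx))⟩) hxt
  exact ne_of_mem_of_not_mem' hxt (notMem_empty x)

theorem mem_part_comm (P : Finpartition s) {x y : α} (h : x ∈ P.part y) : y ∈ P.part x := by
  obtain ⟨B, hB, hx, hy⟩ := P.mem_part_iff_exists.1 h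
  exact P.mem_part_iff_exists.2 ⟨B, hB, hy, hx⟩

theorem eq_part_of_mem_part (P : Finpartition s) {B : Finset α} (hB : B ∈ P.parts) {x y : α}
    (hxB : x ∈ B) (hxy : x ∈ P.part y) : B = P.part y :=
  P.eq_of_mem_parts hB (P.part_mem.2 (P.part_nonempty.1 ⟨x, hxy⟩)) hxB hxy

def union (Q : Finpartition s) (R : Finpartition t) (hst : Disjoint s t) (hu : s ∪ t = u) :
    Finpartition u where
  parts := Q.parts ∪ R.parts
  supIndep := by
    rw [supIndep_iff_pairwiseDisjoint, coe_union]
    exact Q.disjoint.union R.disjoint fun B hB C hC _ => hst.mono (Q.le hB) (R.le hC)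
  sup_parts := by rw [sup_union, Q.sup_parts, R.sup_parts]; exact hu
  bot_notMem h := (mem_union.1 h).elim (fun h => Q.bot_notMem h) (fun h => R.bot_notMem h)

section union

variable {Q : Finpartition s} {R : Finpartition t} {hst : Disjoint s t} {hu : s ∪ t = u}
  {x : α}

theorem part_union_of_mem_left (hx : x ∈ s) : (Q.union R hst hu).part x = Q.part x :=
  part_eq_of_mem _ (mem_union_left _ (Q.part_mem.2 hx)) (Q.mem_part hx)

theorem part_union_of_mem_right (hx : x ∈ t) : (Q.union R hst hu).part x = R.part x :=
  part_eq_of_mem _ (mem_union_right _ (R.part_mem.2 hx)) (R.mem_part hx)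

end union

/-- If `y ∉ t`, then `{x}` becomes a new part. -/
def insertIntoPart (R : Finpartition t) {x : α} (hx : x ∉ t) (y : α) :
    Finpartition (insert x t) where
  parts := insert (insert x (R.part y)) (R.parts.erase (R.part y))
  supIndep := by
    rw [supIndep_iff_pairwiseDisjoint, coe_insert]
    refine (R.disjoint.subset (coe_subset.2 (erase_subset _ _))).insert fun B hB _ => ?_
    obtain ⟨hBy, hB⟩ := mem_erase.1 hB
    refine disjoint_insert_left.2 ⟨fun hxB => hx (R.le hB hxB), disjoint_left.2 fun z hzy hzB => ?_⟩
    exact hBy (R.eq_part_of_mem_part hB hzB hzy)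
  sup_parts := by
    ext z
    simp only [mem_sup, mem_insert, mem_erase, id, exists_eq_or_imp]
    constructor
    · rintro ((hz | hz) | ⟨B, ⟨-, hB⟩, hzB⟩)
      · exact Or.inl hz
      · exact Or.inr (R.part_subset y hz)
      · exact Or.inr (R.le hB hzB)
    · rintro (hz | hz)
      · exact Or.inl (Or.inl hz)
      · by_cases hzy : z ∈ R.part y
        · exact Or.inl (Or.inr hzy)
        · exact Or.inr ⟨R.part z, ⟨fun h => hzy (h ▸ R.mem_part hz), R.part_mem.2 hz⟩,
            R.mem_part hz⟩
  bot_notMem h := by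
    rcases mem_insert.1 h with h | h
    · exact insert_ne_empty _ _ h.symm
    · exact R.bot_notMem (mem_of_mem_erase h)

section insertIntoPart

variable (R : Finpartition t) {x : α} (hx : x ∉ t) (y : α) {z : α}

theorem part_insertIntoPart_of_mem_insert_part (hz : z ∈ insert x (R.part y)) :
    (R.insertIntoPart hx y).part z = insert x (R.part y) :=
  part_eq_of_mem _ (mem_insert_self _ _) hz

theorem part_insertIntoPart_of_notMem_part (hz : z ∈ t) (hzy : z ∉ R.part y) :
    (R.insertIntoPart hx y).part z = R.part z :=
  part_eq_of_mem _ (mem_insert_of_mem (mem_erase.2 ⟨fun h => hzy (h ▸ R.mem_part hz),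
    R.part_mem.2 hz⟩)) (R.mem_part hz)

end insertIntoPart

end Finpartition

namespace IsNoncrossing

variable {s t u : Finset ℕ}

theorem restrict {P : Finpartition s} (hP : IsNoncrossing P) (h : t ⊆ s) :
    IsNoncrossing (P.restrict h) := by
  intro a b c d hab hbc hcd B₁ hB₁ B₂ hB₂ ha hc hb hd
  obtain ⟨C₁, hC₁, rfl⟩ := mem_image.1 (mem_erase.1 hB₁).2
  obtain ⟨C₂, hC₂, rfl⟩ := mem_image.1 (mem_erase.1 hB₂).2
  rw [hP a b c d hab hbc hcd C₁ hC₁ C₂ hC₂ (mem_inter.1 ha).1 (mem_inter.1 hc).1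
    (mem_inter.1 hb).1 (mem_inter.1 hd).1]

theorem union {Q : Finpartition s} {R : Finpartition t} {hst : Disjoint s t} {hu : s ∪ t = u}
    (hQ : IsNoncrossing Q) (hR : IsNoncrossing R)
    (hgap : ∀ x ∈ s, ∀ y ∈ s, ∀ z ∈ t, ¬ (x < z ∧ z < y)) :
    IsNoncrossing (Q.union R hst hu) := by
  intro a b c d hab hbc hcd B₁ hB₁ B₂ hB₂ ha hc hb hd
  rcases mem_union.1 hB₁ with hB₁ | hB₁ <;> rcases mem_union.1 hB₂ with hB₂ | hB₂
  · exact hQ a b c d hab hbc hcd B₁ hB₁ B₂ hB₂ ha hc hb hd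
  · exact (hgap a (Q.le hB₁ ha) c (Q.le hB₁ hc) b (R.le hB₂ hb) ⟨hab, hbc⟩).elim
  · exact (hgap b (Q.le hB₂ hb) d (Q.le hB₂ hd) c (R.le hB₁ hc) ⟨hbc, hcd⟩).elim
  · exact hR a b c d hab hbc hcd B₁ hB₁ B₂ hB₂ ha hc hb hd

theorem insertIntoPart {R : Finpartition t} (hR : IsNoncrossing R) {x y : ℕ} {hxt : x ∉ t}
    (hx : ∀ z ∈ t, x < z) (hy : ∀ z ∈ t, y ≤ z) :
    IsNoncrossing (R.insertIntoPart hxt y) := by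
  intro a b c d hab hbc hcd B₁ hB₁ B₂ hB₂ ha hc hb hd
  have hyR (hne : (R.part y).Nonempty) : R.part y ∈ R.parts := R.part_mem.2 (R.part_nonempty.1 hne)
  rcases mem_insert.1 hB₁ with rfl | hB₁ <;> rcases mem_insert.1 hB₂ with rfl | hB₂
  · rfl
  · obtain ⟨hB₂y, hB₂R⟩ := mem_erase.1 hB₂
    have hbt := R.le hB₂R hb
    have hcy : c ∈ R.part y := (mem_insert.1 hc).resolve_left (by have := hx b hbt; omega)
    have hyt := R.part_nonempty.1 ⟨c, hcy⟩
    -- if `a = x`, then `y` takes its place: `y < b` since `b` lies outside the part of `y`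
    obtain ⟨a', ha'y, ha'b⟩ : ∃ a' ∈ R.part y, a' < b := by
      rcases mem_insert.1 ha with - | hay
      · refine ⟨y, R.mem_part hyt, lt_of_le_of_ne (hy b hbt) fun hyb => hB₂y ?_⟩
        exact R.eq_part_of_mem_part hB₂R hb (hyb ▸ R.mem_part hyt)
      · exact ⟨a, hay, hab⟩
    exact (hB₂y (hR a' b c d ha'b hbc hcd _ (hyR ⟨c, hcy⟩) B₂ hB₂R ha'y hcy hb hd).symm).elim
  · obtain ⟨hB₁y, hB₁R⟩ := mem_erase.1 hB₁
    have hxa := hx a (R.le hB₁R ha)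
    have hby : b ∈ R.part y := (mem_insert.1 hb).resolve_left (by omega)
    have hdy : d ∈ R.part y := (mem_insert.1 hd).resolve_left (by omega)
    exact (hB₁y (hR a b c d hab hbc hcd B₁ hB₁R _ (hyR ⟨b, hby⟩) ha hc hby hdy)).elim
  · exact hR a b c d hab hbc hcd B₁ (mem_of_mem_erase hB₁) B₂ (mem_of_mem_erase hB₂) ha hc hb hd

end IsNoncrossing

namespace Finpartition

variable {a b j x : ℕ}

/-- The least element of the part of `a` other than `a` itself, or `b` if `{a}` is a part. -/
def nextInPart (P : Finpartition (Ico a b)) : ℕ :=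
  (insert b ((P.part a).erase a)).min' (insert_nonempty _ _)

section nextInPart

variable (P : Finpartition (Ico a b))

theorem nextInPart_le : P.nextInPart ≤ b :=
  min'_le _ _ (mem_insert_self _ _)

theorem lt_nextInPart (hab : a < b) : a < P.nextInPart := by
  refine (lt_min'_iff _ _).2 fun z hz => ?_
  rcases mem_insert.1 hz with rfl | hz
  · exact hab
  · obtain ⟨hza, hz⟩ := mem_erase.1 hz
    have := mem_Ico.1 (P.part_subset a hz)
    omega

theorem erase_part_subset_Ico_nextInPart : (P.part a).erase a ⊆ Ico P.nextInPart b := fun _ hz =>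
  mem_Ico.2 ⟨min'_le _ _ (mem_insert_of_mem hz),
    (mem_Ico.1 (P.part_subset a (mem_of_mem_erase hz))).2⟩

theorem nextInPart_mem_part (h : P.nextInPart < b) : P.nextInPart ∈ P.part a := by
  rcases mem_insert.1 (min'_mem (insert b ((P.part a).erase a)) (insert_nonempty _ _)) with hb | hj
  · exact absurd hb h.ne
  · exact mem_of_mem_erase hj

theorem part_restrict_nextInPart (h : Ico P.nextInPart b ⊆ Ico a b) :
    (P.restrict h).part P.nextInPart = (P.part a).erase a := by
  obtain hjb | hjb := P.nextInPart_le.lt_or_eq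
  · have hj := P.nextInPart_mem_part hjb
    have ha : a ∈ Ico a b := P.part_nonempty.1 ⟨_, hj⟩
    have haj := P.lt_nextInPart (by simpa using ha)
    rw [part_restrict _ h (mem_Ico.2 ⟨le_rfl, hjb⟩), P.part_eq_of_mem (P.part_mem.2 ha) hj]
    refine subset_antisymm (fun z hz => ?_) fun z hz => mem_inter.2 ⟨mem_of_mem_erase hz,
      P.erase_part_subset_Ico_nextInPart hz⟩
    obtain ⟨hza, hzj⟩ := mem_inter.1 hz
    exact mem_erase.2 ⟨by have := mem_Ico.1 hzj; omega, hza⟩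
  · have hempty : Ico P.nextInPart b = ∅ := by simp [hjb]
    rw [(part_eq_empty _).2 (by simp [hjb]),
      subset_empty.1 (hempty ▸ P.erase_part_subset_Ico_nextInPart : (P.part a).erase a ⊆ ∅)]

end nextInPart

/-- Inverse of the decomposition of a partition of `[a, b)` along the part of `a`: the part of `a`
is that of `j` in `R`, with `a` added. -/
def glueIco (Q : Finpartition (Ico (a + 1) j)) (R : Finpartition (Ico j b)) (haj : a < j)
    (hjb : j ≤ b) : Finpartition (Ico a b) :=
  Q.union (R.insertIntoPart (notMem_Ico_of_lt haj) j)
    (disjoint_insert_right.2 ⟨by simp, Ico_disjoint_Ico_consecutive _ _ _⟩)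
    (by ext; simp only [mem_union, mem_insert, mem_Ico]; omega)

section glueIco

variable {Q : Finpartition (Ico (a + 1) j)} {R : Finpartition (Ico j b)} {haj : a < j}
  {hjb : j ≤ b}

theorem part_glueIco_of_mem_left (hx : x ∈ Ico (a + 1) j) :
    (glueIco Q R haj hjb).part x = Q.part x :=
  part_union_of_mem_left hx

theorem part_glueIco_of_mem_insert_part (hx : x ∈ insert a (R.part j)) :
    (glueIco Q R haj hjb).part x = insert a (R.part j) := by
  rw [glueIco, part_union_of_mem_right (insert_subset_insert _ (R.part_subset j) hx),
    part_insertIntoPart_of_mem_insert_part _ _ _ hx]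

theorem part_glueIco_of_notMem_part (hx : x ∈ Ico j b) (hxj : x ∉ R.part j) :
    (glueIco Q R haj hjb).part x = R.part x := by
  rw [glueIco, part_union_of_mem_right (mem_insert_of_mem hx),
    part_insertIntoPart_of_notMem_part _ _ _ hx hxj]

variable (haj hjb)

theorem nextInPart_glueIco : (glueIco Q R haj hjb).nextInPart = j := by
  have haR : a ∉ R.part j := fun h => notMem_Ico_of_lt haj (R.part_subset j h)
  simp only [nextInPart, part_glueIco_of_mem_insert_part (mem_insert_self _ _), erase_insert haR]
  refine le_antisymm (min'_le _ _ ?_) (le_min' _ _ _ fun z hz => ?_)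
  · obtain hjb | rfl := hjb.lt_or_eq
    · exact mem_insert_of_mem (R.mem_part (mem_Ico.2 ⟨le_rfl, hjb⟩))
    · exact mem_insert_self _ _
  · rcases mem_insert.1 hz with rfl | hz
    · exact hjb
    · exact (mem_Ico.1 (R.part_subset j hz)).1

theorem restrict_glueIco_left (h : Ico (a + 1) j ⊆ Ico a b) :
    (glueIco Q R haj hjb).restrict h = Q :=
  ext_of_part_eq fun x hx => by
    rw [part_restrict _ _ hx, part_glueIco_of_mem_left hx, inter_eq_left.2 (Q.part_subset x)]

theorem restrict_glueIco_right (h : Ico j b ⊆ Ico a b) :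
    (glueIco Q R haj hjb).restrict h = R :=
  ext_of_part_eq fun x hx => by
    rw [part_restrict _ _ hx]
    by_cases hxj : x ∈ R.part j
    · rw [part_glueIco_of_mem_insert_part (mem_insert_of_mem hxj),
        insert_inter_of_notMem (notMem_Ico_of_lt haj), inter_eq_left.2 (R.part_subset j),
        R.eq_part_of_mem_part (R.part_mem.2 hx) (R.mem_part hx) hxj]
    · rw [part_glueIco_of_notMem_part hx hxj, inter_eq_left.2 (R.part_subset x)]

end glueIco

end Finpartition

namespace IsNoncrossing

variable {a b j x : ℕ}

section nextInPart

variable {P : Finpartition (Ico a b)}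

theorem subset_Ico_or_subset_Ico (hP : IsNoncrossing P) {B : Finset ℕ} (hB : B ∈ P.parts)
    (haB : a ∉ B) : B ⊆ Ico (a + 1) P.nextInPart ∨ B ⊆ Ico P.nextInPart b := by
  have hBab : ∀ z ∈ B, a < z ∧ z < b := fun z hz => by
    have := mem_Ico.1 (P.le hB hz)
    have : z ≠ a := fun h => haB (h ▸ hz)
    omega
  by_contra! h
  obtain ⟨⟨y, hyB, hy⟩, ⟨z, hzB, hz⟩⟩ := And.imp not_subset.1 not_subset.1 h
  simp only [mem_Ico, not_and, not_lt] at hy hz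
  obtain ⟨hay, hyb⟩ := hBab y hyB
  obtain ⟨haz, hzb⟩ := hBab z hzB
  have hjy := hy hay
  have hzj : z < P.nextInPart := by
    by_contra! h
    have := hz h
    omega
  have hj := P.nextInPart_mem_part (by omega)
  have ha : a ∈ P.part a := P.mem_part (P.part_nonempty.1 ⟨_, hj⟩)
  have hjy' : P.nextInPart < y := lt_of_le_of_ne hjy fun h =>
    haB (P.eq_part_of_mem_part hB (h ▸ hyB) hj ▸ ha)
  have hBa := hP a z P.nextInPart y haz hzj hjy' _ (P.part_mem.2 (P.part_nonempty.1 ⟨_, ha⟩)) B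
    hB ha hj hzB hyB
  exact haB (hBa ▸ ha)

theorem part_subset_Ico_left (hP : IsNoncrossing P) (hx : x ∈ Ico a b) (hxa : x ∉ P.part a)
    (hxj : x < P.nextInPart) : P.part x ⊆ Ico (a + 1) P.nextInPart :=
  (hP.subset_Ico_or_subset_Ico (P.part_mem.2 hx) fun ha => hxa (P.mem_part_comm ha)).resolve_right
    fun h => (mem_Ico.1 (h (P.mem_part hx))).1.not_gt hxj

theorem part_subset_Ico_right (hP : IsNoncrossing P) (hx : x ∈ Ico a b) (hxa : x ∉ P.part a)
    (hxj : P.nextInPart ≤ x) : P.part x ⊆ Ico P.nextInPart b :=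
  (hP.subset_Ico_or_subset_Ico (P.part_mem.2 hx) fun ha => hxa (P.mem_part_comm ha)).resolve_left
    fun h => (mem_Ico.1 (h (P.mem_part hx))).2.not_ge hxj

end nextInPart

theorem glueIco {Q : Finpartition (Ico (a + 1) j)} {R : Finpartition (Ico j b)}
    (hQ : IsNoncrossing Q) (hR : IsNoncrossing R) (haj : a < j) (hjb : j ≤ b) :
    IsNoncrossing (Q.glueIco R haj hjb) :=
  hQ.union (hR.insertIntoPart (fun z hz => haj.trans_le (mem_Ico.1 hz).1)
    (fun z hz => (mem_Ico.1 hz).1)) (by simp only [mem_Ico, mem_insert]; omega)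

end IsNoncrossing

theorem Finpartition.glueIco_restrict {a b j : ℕ} {P : Finpartition (Ico a b)}
    (hP : IsNoncrossing P) (hj : P.nextInPart = j) (haj : a < j) (hjb : j ≤ b)
    (h₁ : Ico (a + 1) j ⊆ Ico a b) (h₂ : Ico j b ⊆ Ico a b) :
    glueIco (P.restrict h₁) (P.restrict h₂) haj hjb = P := by
  subst hj
  have ha : a ∈ Ico a b := mem_Ico.2 ⟨le_rfl, haj.trans_le hjb⟩
  have hpart : insert a ((P.restrict h₂).part P.nextInPart) = P.part a := by
    rw [part_restrict_nextInPart, insert_erase (P.mem_part ha)]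
  refine ext_of_part_eq fun x hx => ?_
  by_cases hxa : x ∈ P.part a
  · rw [part_glueIco_of_mem_insert_part (hpart ▸ hxa), hpart,
      P.part_eq_of_mem (P.part_mem.2 ha) hxa]
  obtain hxj | hxj := lt_or_ge x P.nextInPart
  · have hxl : x ∈ Ico (a + 1) P.nextInPart := by
      have : x ≠ a := fun h => hxa (h ▸ P.mem_part ha)
      have := mem_Ico.1 hx
      exact mem_Ico.2 ⟨by omega, hxj⟩
    rw [part_glueIco_of_mem_left hxl, part_restrict _ _ hxl,
      inter_eq_left.2 (hP.part_subset_Ico_left hx hxa hxj)]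
  · have hxr : x ∈ Ico P.nextInPart b := mem_Ico.2 ⟨hxj, (mem_Ico.1 hx).2⟩
    have hxR : x ∉ (P.restrict h₂).part P.nextInPart := by
      rw [part_restrict_nextInPart]
      exact fun h => hxa (mem_of_mem_erase h)
    rw [part_glueIco_of_notMem_part hxr hxR, part_restrict _ _ hxr,
      inter_eq_left.2 (hP.part_subset_Ico_right hx hxa hxj)]

theorem sum_Ioc_catalan_mul_catalan {a b : ℕ} (hab : a < b) :
    ∑ j ∈ Ioc a b, catalan (j - (a + 1)) * catalan (b - j) = catalan (b - a) := by
  obtain ⟨m, rfl⟩ := Nat.exists_eq_add_of_lt hab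
  rw [← Ico_add_one_add_one_eq_Ioc, sum_Ico_eq_sum_range, show a + m + 1 - a = m + 1 by omega,
    show a + m + 1 + 1 - (a + 1) = m + 1 by omega, catalan_succ,
    Fin.sum_univ_eq_sum_range (fun k => catalan k * catalan (m - k))]
  refine sum_congr rfl fun k _ => ?_
  rw [show a + 1 + k - (a + 1) = k by omega, show a + m + 1 - (a + 1 + k) = m - k by omega]

theorem choose_two_mul_add_one_eq_mul_catalan (n : ℕ) :
    (2 * n + 1).choose n = (2 * n + 1) * catalan n := by
  refine Nat.eq_of_mul_eq_mul_right n.succ_pos ?_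
  calc (2 * n + 1).choose n * (n + 1) = (2 * n + 1).choose (n + 1) * (n + 1) := by
        rw [Nat.choose_symm_half]
    _ = (2 * n + 1) * n.centralBinom := by
        rw [Nat.centralBinom_eq_two_mul_choose, Nat.add_one_mul_choose_eq]
    _ = (2 * n + 1) * catalan n * (n + 1) := by
        rw [← succ_mul_catalan_eq_centralBinom]; ring

abbrev NoncrossingPartition (s : Finset ℕ) : Type := {P : Finpartition s // IsNoncrossing P}

namespace NoncrossingPartition

variable {a b j : ℕ}

def nextInPartFiberEquiv (haj : a < j) (hjb : j ≤ b) :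
    {P : NoncrossingPartition (Ico a b) // P.1.nextInPart = j} ≃
      NoncrossingPartition (Ico (a + 1) j) × NoncrossingPartition (Ico j b) :=
  have h₁ : Ico (a + 1) j ⊆ Ico a b := Ico_subset_Ico a.le_succ hjb
  have h₂ : Ico j b ⊆ Ico a b := Ico_subset_Ico haj.le le_rfl
  { toFun P := (⟨P.1.1.restrict h₁, P.1.2.restrict h₁⟩, ⟨P.1.1.restrict h₂, P.1.2.restrict h₂⟩)
    invFun QR := ⟨⟨QR.1.1.glueIco QR.2.1 haj hjb, QR.1.2.glueIco QR.2.2 haj hjb⟩,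
      Finpartition.nextInPart_glueIco haj hjb⟩
    left_inv P := Subtype.ext (Subtype.ext (Finpartition.glueIco_restrict P.1.2 P.2 haj hjb h₁ h₂))
    right_inv _ := Prod.ext (Subtype.ext (Finpartition.restrict_glueIco_left haj hjb h₁))
      (Subtype.ext (Finpartition.restrict_glueIco_right haj hjb h₂)) }

theorem card_Ico_eq_sum (hab : a < b) :
    Nat.card (NoncrossingPartition (Ico a b)) =
      ∑ j ∈ Ioc a b, Nat.card (NoncrossingPartition (Ico (a + 1) j)) *
        Nat.card (NoncrossingPartition (Ico j b)) := by
  let f (P : NoncrossingPartition (Ico a b)) : Ioc a b :=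
    ⟨P.1.nextInPart, mem_Ioc.2 ⟨P.1.lt_nextInPart hab, P.1.nextInPart_le⟩⟩
  rw [← Nat.card_congr (Equiv.sigmaFiberEquiv f), Nat.card_sigma, ← sum_coe_sort (Ioc a b)]
  refine Fintype.sum_congr _ _ fun j => ?_
  have hj := mem_Ioc.1 j.2
  rw [← Nat.card_prod, ← Nat.card_congr (nextInPartFiberEquiv hj.1 hj.2)]
  exact Nat.card_congr (Equiv.subtypeEquivRight fun P => Subtype.ext_iff)

theorem card_Ico_of_le (h : b ≤ a) : Nat.card (NoncrossingPartition (Ico a b)) = 1 := by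
  rw [Ico_eq_empty_of_le h]
  show Nat.card {P : Finpartition (⊥ : Finset ℕ) // IsNoncrossing P} = 1
  refine Nat.card_eq_one_iff_unique.2 ⟨inferInstance, ⟨⟨default, ?_⟩⟩⟩
  intro _ _ _ _ _ _ _ B hB
  simp [Finpartition.parts_eq_empty_iff.2 rfl] at hB

theorem card_Ico (a b : ℕ) : Nat.card (NoncrossingPartition (Ico a b)) = catalan (b - a) := by
  induction h : b - a using Nat.strong_induction_on generalizing a b with
  | _ m ih =>
    obtain hba | hab := le_or_gt b a
    · rw [card_Ico_of_le hba, ← h, Nat.sub_eq_zero_of_le hba, catalan_zero]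
    · rw [card_Ico_eq_sum hab, ← h, ← sum_Ioc_catalan_mul_catalan hab]
      refine sum_congr rfl fun j hj => ?_
      have := mem_Ioc.1 hj
      rw [ih _ (by omega) _ _ rfl, ih _ (by omega) _ _ rfl]

end NoncrossingPartition

/-- For every natural number `n`, the number of noncrossing partitions of `{1,…,n}` equals
the Catalan number `C_n = (1/(2n+1))·C(2n+1, n)`. -/
theorem catalan_counts_noncrossing_partitions (n : ℕ) :
    Nat.card {P : Finpartition (Finset.Icc 1 n) // IsNoncrossing P} =
      (2 * n + 1).choose n / (2 * n + 1) := by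
  rw [choose_two_mul_add_one_eq_mul_catalan, Nat.mul_div_cancel_left _ (by omega),
    ← Ico_add_one_right_eq_Icc, NoncrossingPartition.card_Ico, Nat.add_sub_cancel]
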